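/- arXiv:1302.0715 — 4 statements merged into one kernel-verified Lean document; each statement's English description precedes it below -/
import Mathlib

section
/- Let n ∈ ℕ and (F,σ) ∈ 𝒢ₛ_n, with min(F,σ) and max(F,σ) the values attached by any derivation in the recursive definition. Then min(F,σ) = min{|σ∧τ| : τ ∈ F} and max(F,σ) = max{|σ∧τ| : τ ∈ F}. In particular, min(F,σ) and max(F,σ) do not depend on the chosen derivation. -/
abbrev Cantor : Type := ℕ → Bool

/- `wedgeLen σ τ` is the length `|σ∧τ| ∈ ℕ∞` of the longest common initial segment
of `σ` and `τ` (`⊤` if `σ = τ`).  Since wedges `σ∧τ`, `σ∧τ'` of a common sequence are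
initial segments of that sequence, comparisons `⊑`, `⊏`, `=` between such wedges are
equivalent to `≤`, `<`, `=` between their lengths. -/
open Classical in
noncomputable def wedgeLen (σ τ : Cantor) : ℕ∞ :=
  if h : σ = τ then ⊤ else ((Nat.find (Function.ne_iff.mp h) : ℕ) : ℕ∞)

/-- `GS n F σ m M` : the pair `(F,σ)` belongs to `𝒢ₛ_n` via a derivation attaching the
values `min(F,σ) = m` and `max(F,σ) = M`. -/
inductive GS : ℕ → Finset Cantor → Cantor → ℕ∞ → ℕ∞ → Prop
  | base (d : ℕ) (τ : Fin (d + 1) → Cantor) (σ : Cantor) (F : Finset Cantor)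
      (h1 : ∀ i, σ ≠ τ i)
      (h2 : 0 < wedgeLen σ (τ 0))
      (h3 : ∀ i j : Fin (d + 1), i < j → wedgeLen σ (τ i) < wedgeLen σ (τ j))
      (h4 : ((d + 1 : ℕ) : ℕ∞) ≤ wedgeLen σ (τ 0))
      (hF : ∀ x, x ∈ F ↔ ∃ i, x = τ i) :
      GS 1 F σ (wedgeLen σ (τ 0)) (wedgeLen σ (τ (Fin.last d)))
  | up (n : ℕ) (F : Finset Cantor) (σ : Cantor) (m M : ℕ∞) :
      GS n F σ m M → GS (n + 1) F σ m M
  | skipped (n : ℕ) (d : ℕ) (Fs : Fin (d + 1) → Finset Cantor)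
      (σs : Fin (d + 1) → Cantor) (mins maxs : Fin (d + 1) → ℕ∞)
      (σ : Cantor) (F : Finset Cantor)
      (hGS : ∀ i, GS n (Fs i) (σs i) (mins i) (maxs i))
      (hdisj : ∀ i j : Fin (d + 1), i ≠ j → ∀ x, x ∈ Fs i → x ∉ Fs j)
      (hne : ∀ i, σ ≠ σs i)
      (h0 : 0 < wedgeLen σ (σs 0))
      (hmono : ∀ i j : Fin (d + 1), i < j → wedgeLen σ (σs i) < wedgeLen σ (σs j))
      (hlt : ∀ i, wedgeLen σ (σs i) < mins i)
      (hd : ((d + 1 : ℕ) : ℕ∞) ≤ wedgeLen σ (σs 0))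
      (hF : ∀ x, x ∈ F ↔ ∃ i, x ∈ Fs i) :
      GS (n + 1) F σ (wedgeLen σ (σs 0)) (wedgeLen σ (σs (Fin.last d)))
  | attached (n : ℕ) (d : ℕ) (Fs : Fin (d + 1) → Finset Cantor)
      (mins maxs : Fin (d + 1) → ℕ∞) (σ : Cantor) (F : Finset Cantor)
      (hGS : ∀ i, GS n (Fs i) σ (mins i) (maxs i))
      (hdisj : ∀ i j : Fin (d + 1), i ≠ j → ∀ x, x ∈ Fs i → x ∉ Fs j)
      (hord : ∀ i : Fin d, maxs i.castSucc < mins i.succ)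
      (hd : ((d + 1 : ℕ) : ℕ∞) ≤ mins 0)
      (hF : ∀ x, x ∈ F ↔ ∃ i, x ∈ Fs i) :
      GS (n + 1) F σ (mins 0) (maxs (Fin.last d))

open Classical in
lemma wedge_agree (σ τ : Cantor) (i : ℕ) (h : (i : ℕ∞) < wedgeLen σ τ) : σ i = τ i := by
  unfold wedgeLen at h
  split at h
  · next he => rw [he]
  · by_contra hc
    exact absurd (Nat.cast_lt.mp h) (not_lt.mpr (Nat.find_le hc))

open Classical in
lemma wedge_le (σ τ : Cantor) (k : ℕ) (h : σ k ≠ τ k) : wedgeLen σ τ ≤ (k : ℕ∞) := by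
  unfold wedgeLen
  split
  · next he => exact absurd (by rw [he]) h
  · exact Nat.cast_le.mpr (Nat.find_le h)

open Classical in
lemma le_wedge (σ τ : Cantor) (k : ℕ) (h : ∀ i < k, σ i = τ i) : (k : ℕ∞) ≤ wedgeLen σ τ := by
  unfold wedgeLen
  split
  · exact le_top
  · exact Nat.cast_le.mpr ((Nat.le_find_iff _ _).mpr fun m hm => not_not.mpr (h m hm))

open Classical in
lemma wedge_ne (σ τ : Cantor) (k : ℕ) (h : wedgeLen σ τ = (k : ℕ∞)) : σ k ≠ τ k := by
  unfold wedgeLen at h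
  split at h
  · exact absurd h (by simp)
  · next hne =>
    have := Nat.cast_injective (R := ℕ∞) h
    exact this ▸ Nat.find_spec (Function.ne_iff.mp hne)

lemma wedge_ne_top (σ τ : Cantor) (h : σ ≠ τ) : wedgeLen σ τ ≠ ⊤ := by
  unfold wedgeLen
  split
  · next he => exact absurd he h
  · simp

lemma wedge_ultra (σ ρ τ : Cantor) (h : wedgeLen σ ρ < wedgeLen ρ τ) :
    wedgeLen σ τ = wedgeLen σ ρ := by
  have hne : σ ≠ ρ := by
    intro e
    rw [e] at h
    have : wedgeLen ρ ρ = ⊤ := by unfold wedgeLen; simp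
    rw [this] at h
    exact absurd h (not_top_lt)
  obtain ⟨k, hk⟩ := (WithTop.ne_top_iff_exists).mp (wedge_ne_top σ ρ hne)
  have hk' : wedgeLen σ ρ = (k : ℕ∞) := hk.symm
  have agree : ∀ i < k, σ i = τ i := by
    intro i hi
    have h1 : σ i = ρ i := wedge_agree _ _ i (hk' ▸ Nat.cast_lt.mpr hi)
    have h2 : ρ i = τ i := wedge_agree _ _ i (lt_trans (hk' ▸ Nat.cast_lt.mpr hi) h)
    exact h1.trans h2
  have hkne : σ k ≠ τ k := by
    have h1 : σ k ≠ ρ k := wedge_ne _ _ k hk'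
    have h2 : ρ k = τ k := wedge_agree _ _ k (hk' ▸ h)
    exact fun e => h1 (e.trans h2.symm)
  rw [hk']
  exact le_antisymm (wedge_le _ _ k hkne) (le_wedge _ _ k agree)

lemma GS_eq {n : ℕ} {F : Finset Cantor} {σ : Cantor} {m M : ℕ∞} (h : GS n F σ m M) :
    F.Nonempty ∧ m = F.inf (wedgeLen σ) ∧ M = F.sup (wedgeLen σ) := by
  induction h with
  | base d τ σ F h1 h2 h3 h4 hF =>
    have hmem : ∀ i, τ i ∈ F := fun i => (hF _).mpr ⟨i, rfl⟩
    refine ⟨⟨τ 0, hmem 0⟩, ?_, ?_⟩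
    · refine le_antisymm (Finset.le_inf ?_) (Finset.inf_le (hmem 0))
      intro x hx
      obtain ⟨i, rfl⟩ := (hF x).mp hx
      rcases eq_or_lt_of_le (Fin.zero_le i) with e | e
      · exact le_of_eq (by rw [← e])
      · exact (h3 0 i e).le
    · refine le_antisymm (Finset.le_sup (hmem (Fin.last d))) (Finset.sup_le ?_)
      intro x hx
      obtain ⟨i, rfl⟩ := (hF x).mp hx
      rcases eq_or_lt_of_le (Fin.le_last i) with e | e
      · exact le_of_eq (by rw [e])
      · exact (h3 i (Fin.last d) e).le
  | up n F σ m M h ih => exact ih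
  | skipped n d Fs σs mins maxs σ F hGS hdisj hne h0 hmono hlt hd hF ih =>
    have hconst : ∀ i, ∀ x ∈ Fs i, wedgeLen σ x = wedgeLen σ (σs i) := by
      intro i x hx
      have h1 : mins i ≤ wedgeLen (σs i) x := (ih i).2.1 ▸ Finset.inf_le hx
      exact wedge_ultra σ (σs i) x (lt_of_lt_of_le (hlt i) h1)
    obtain ⟨a, ha⟩ := (ih 0).1
    obtain ⟨b, hb⟩ := (ih (Fin.last d)).1
    have haF : a ∈ F := (hF a).mpr ⟨0, ha⟩
    have hbF : b ∈ F := (hF b).mpr ⟨Fin.last d, hb⟩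
    refine ⟨⟨a, haF⟩, ?_, ?_⟩
    · refine le_antisymm (Finset.le_inf ?_) ?_
      · intro x hx
        obtain ⟨i, hi⟩ := (hF x).mp hx
        rw [hconst i x hi]
        rcases eq_or_lt_of_le (Fin.zero_le i) with e | e
        · exact le_of_eq (by rw [← e])
        · exact (hmono 0 i e).le
      · calc F.inf (wedgeLen σ) ≤ wedgeLen σ a := Finset.inf_le haF
          _ = wedgeLen σ (σs 0) := hconst 0 a ha
    · refine le_antisymm ?_ (Finset.sup_le ?_)
      · calc wedgeLen σ (σs (Fin.last d)) = wedgeLen σ b := (hconst (Fin.last d) b hb).symm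
          _ ≤ F.sup (wedgeLen σ) := Finset.le_sup hbF
      · intro x hx
        obtain ⟨i, hi⟩ := (hF x).mp hx
        rw [hconst i x hi]
        rcases eq_or_lt_of_le (Fin.le_last i) with e | e
        · exact le_of_eq (by rw [e])
        · exact (hmono i (Fin.last d) e).le
  | attached n d Fs mins maxs σ F hGS hdisj hord hd hF ih =>
    have hms : ∀ i, mins i ≤ maxs i := by
      intro i
      obtain ⟨a, ha⟩ := (ih i).1
      rw [(ih i).2.1, (ih i).2.2]
      exact le_trans (Finset.inf_le ha) (Finset.le_sup ha)
    have hmin0 : ∀ i, mins 0 ≤ mins i := by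
      intro i
      induction i using Fin.induction with
      | zero => exact le_refl _
      | succ j ihj => exact ihj.trans ((hms j.castSucc).trans (hord j).le)
    have hmaxlast : ∀ i, maxs i ≤ maxs (Fin.last d) := by
      intro i
      induction i using Fin.reverseInduction with
      | last => exact le_refl _
      | cast j ihj => exact ((hord j).le.trans (hms j.succ)).trans ihj
    have hsub : ∀ i, Fs i ⊆ F := fun i x hx => (hF x).mpr ⟨i, hx⟩
    obtain ⟨a, ha⟩ := (ih 0).1
    refine ⟨⟨a, hsub 0 ha⟩, ?_, ?_⟩
    · refine le_antisymm (Finset.le_inf ?_) ?_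
      · intro x hx
        obtain ⟨i, hi⟩ := (hF x).mp hx
        exact (hmin0 i).trans ((ih i).2.1 ▸ Finset.inf_le hi)
      · rw [(ih 0).2.1]
        exact Finset.inf_mono (hsub 0)
    · refine le_antisymm ?_ (Finset.sup_le ?_)
      · rw [(ih (Fin.last d)).2.2]
        exact Finset.sup_mono (hsub (Fin.last d))
      · intro x hx
        obtain ⟨i, hi⟩ := (hF x).mp hx
        exact ((ih i).2.2 ▸ Finset.le_sup hi).trans (hmaxlast i)

theorem GS_min_max_eq_inf_sup (n : ℕ) (hn : 1 ≤ n) (F : Finset Cantor) (σ : Cantor)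
    (m M : ℕ∞) (h : GS n F σ m M) :
    (m = F.inf (wedgeLen σ) ∧ M = F.sup (wedgeLen σ)) ∧
      ∀ m' M' : ℕ∞, GS n F σ m' M' → m' = m ∧ M' = M := by
  refine ⟨⟨(GS_eq h).2.1, (GS_eq h).2.2⟩, ?_⟩
  intro m' M' h'
  exact ⟨(GS_eq h').2.1.trans (GS_eq h).2.1.symm, (GS_eq h').2.2.trans (GS_eq h).2.2.symm⟩
end

section
/- Let n ∈ ℕ and (F,σ) ∈ 𝒢ₛ_n with #F ≥ 2. Then there exists σ′ ∈ 2^ℕ such that (F,σ′) ∈ 𝒢ₛ_n and min(F,σ′) = min{|τ_1∧τ_2| : τ_1,τ_2 ∈ F with τ_1 ≠ τ_2}. -/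
lemma wedgeLen_self (σ : Cantor) : wedgeLen σ σ = ⊤ := dif_pos rfl

lemma wedgeLen_exists_coe {σ τ : Cantor} (h : σ ≠ τ) : ∃ k : ℕ, wedgeLen σ τ = (k : ℕ∞) := by
  unfold wedgeLen; rw [dif_neg h]; exact ⟨_, rfl⟩

lemma wedgeLen_eq_coe_iff (σ τ : Cantor) (k : ℕ) :
    wedgeLen σ τ = (k : ℕ∞) ↔ (∀ i < k, σ i = τ i) ∧ σ k ≠ τ k := by
  unfold wedgeLen
  split
  · next h => subst h; simp
  · next h =>
    rw [Nat.cast_inj, Nat.find_eq_iff]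
    constructor
    · rintro ⟨h1, h2⟩
      exact ⟨fun i hi => not_ne_iff.mp (h2 i hi), h1⟩
    · rintro ⟨h1, h2⟩
      exact ⟨h2, fun i hi => not_ne_iff.mpr (h1 i hi)⟩

lemma agree_of_lt_wedgeLen {σ τ : Cantor} {i : ℕ} (h : (i : ℕ∞) < wedgeLen σ τ) :
    σ i = τ i := by
  by_cases he : σ = τ
  · rw [he]
  · obtain ⟨k, hk⟩ := wedgeLen_exists_coe he
    rw [hk] at h
    exact ((wedgeLen_eq_coe_iff σ τ k).mp hk).1 i (by exact_mod_cast h)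

lemma wedgeLen_symm (σ τ : Cantor) : wedgeLen σ τ = wedgeLen τ σ := by
  by_cases he : σ = τ
  · rw [he]
  · obtain ⟨k, hk⟩ := wedgeLen_exists_coe he
    obtain ⟨h1, h2⟩ := (wedgeLen_eq_coe_iff σ τ k).mp hk
    rw [hk]
    exact ((wedgeLen_eq_coe_iff τ σ k).mpr ⟨fun i hi => (h1 i hi).symm, fun hc => h2 hc.symm⟩).symm

lemma wedgeLen_transfer {a b c : Cantor} (h : wedgeLen a b < wedgeLen a c) :
    wedgeLen b c = wedgeLen a b := by
  have hab : a ≠ b := by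
    intro he; rw [he, wedgeLen_self] at h; exact (not_top_lt h)
  obtain ⟨k, hk⟩ := wedgeLen_exists_coe hab
  rw [hk] at h ⊢
  obtain ⟨hagree, hne⟩ := (wedgeLen_eq_coe_iff a b k).mp hk
  refine (wedgeLen_eq_coe_iff b c k).mpr ⟨?_, ?_⟩
  · intro i hi
    have h2 : a i = c i := agree_of_lt_wedgeLen (lt_trans (by exact_mod_cast hi) h)
    exact (hagree i hi).symm.trans h2
  · have h2 : a k = c k := agree_of_lt_wedgeLen h
    exact fun hbc => hne (h2.trans hbc.symm)

lemma wedge_of_mem_far (σ ρ τ : Cantor) (m' : ℕ∞) (h1 : wedgeLen σ ρ < m')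
    (h2 : m' ≤ wedgeLen ρ τ) : wedgeLen σ τ = wedgeLen σ ρ := by
  have hlt : wedgeLen ρ σ < wedgeLen ρ τ := by
    rw [← wedgeLen_symm]; exact lt_of_lt_of_le h1 h2
  rw [wedgeLen_transfer hlt, wedgeLen_symm]

lemma chain_mono {d : ℕ} (mins maxs : Fin (d + 1) → ℕ∞)
    (hle : ∀ i, mins i ≤ maxs i)
    (hord : ∀ i : Fin d, maxs i.castSucc < mins i.succ) :
    ∀ i j : Fin (d + 1), i ≤ j → mins i ≤ mins j := by
  have key : ∀ b : ℕ, ∀ hb : b < d + 1, ∀ a : ℕ, a ≤ b → ∀ ha : a < d + 1,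
      mins ⟨a, ha⟩ ≤ mins ⟨b, hb⟩ := by
    intro b
    induction b with
    | zero =>
      intro hb a hab ha
      have : a = 0 := Nat.le_zero.mp hab
      subst this; exact le_refl _
    | succ b ihb =>
      intro hb a hab ha
      rcases Nat.eq_or_lt_of_le hab with h | h
      · subst h; exact le_refl _
      · have hb' : b < d + 1 := Nat.lt_of_succ_lt hb
        have hbd : b < d := Nat.succ_lt_succ_iff.mp hb
        have h1 : mins ⟨a, ha⟩ ≤ mins ⟨b, hb'⟩ := ihb hb' a (Nat.lt_succ_iff.mp h) ha
        have h2 := hord ⟨b, hbd⟩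
        have e1 : (⟨b, hbd⟩ : Fin d).castSucc = (⟨b, hb'⟩ : Fin (d + 1)) := rfl
        have e2 : (⟨b, hbd⟩ : Fin d).succ = (⟨b + 1, hb⟩ : Fin (d + 1)) := rfl
        rw [e1, e2] at h2
        exact h1.trans ((hle _).trans h2.le)
  intro i j hij
  have := key j.val j.isLt i.val hij i.isLt
  simpa using this

lemma GS_struct {n : ℕ} {F : Finset Cantor} {σ : Cantor} {m M : ℕ∞}
    (h : GS n F σ m M) :
    (∃ τ ∈ F, wedgeLen σ τ = m) ∧
    (∀ τ ∈ F, m ≤ wedgeLen σ τ ∧ wedgeLen σ τ ≤ M) ∧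
    (∀ τ₁ ∈ F, ∀ τ₂ ∈ F, τ₁ ≠ τ₂ → m ≤ wedgeLen τ₁ τ₂) := by
  induction h with
  | base d τ σ F h1 h2 h3 h4 hF =>
    have mono : ∀ i j : Fin (d + 1), i ≤ j → wedgeLen σ (τ i) ≤ wedgeLen σ (τ j) := by
      intro i j hij
      rcases eq_or_lt_of_le hij with h | h
      · rw [h]
      · exact (h3 i j h).le
    refine ⟨⟨τ 0, (hF _).mpr ⟨0, rfl⟩, rfl⟩, ?_, ?_⟩
    · intro x hx
      obtain ⟨i, rfl⟩ := (hF x).mp hx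
      exact ⟨mono 0 i (Fin.zero_le i), mono i (Fin.last d) (Fin.le_last i)⟩
    · have cross : ∀ i j : Fin (d + 1), i < j →
          wedgeLen σ (τ 0) ≤ wedgeLen (τ i) (τ j) := by
        intro i j hij
        rw [wedgeLen_transfer (h3 i j hij)]
        exact mono 0 i (Fin.zero_le i)
      intro x hx y hy hxy
      obtain ⟨i, rfl⟩ := (hF x).mp hx
      obtain ⟨j, rfl⟩ := (hF y).mp hy
      rcases lt_trichotomy i j with h | h | h
      · exact cross i j h
      · exact absurd (congrArg τ h) hxy
      · rw [wedgeLen_symm (τ i) (τ j)]; exact cross j i h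
  | up n F σ m M h ih => exact ih
  | skipped n d Fs σs mins maxs σ F hGS hdisj hne h0 hmono hlt hd hF ih =>
    have key : ∀ i, ∀ τ' ∈ Fs i, wedgeLen σ τ' = wedgeLen σ (σs i) := by
      intro i τ' hτ'
      exact wedge_of_mem_far σ (σs i) τ' (mins i) (hlt i) ((ih i).2.1 τ' hτ').1
    have mono : ∀ i j : Fin (d + 1), i ≤ j →
        wedgeLen σ (σs i) ≤ wedgeLen σ (σs j) := by
      intro i j hij
      rcases eq_or_lt_of_le hij with h | h
      · rw [h]
      · exact (hmono i j h).le
    refine ⟨?_, ?_, ?_⟩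
    · obtain ⟨τ', hτ', _⟩ := (ih 0).1
      exact ⟨τ', (hF _).mpr ⟨0, hτ'⟩, key 0 τ' hτ'⟩
    · intro x hx
      obtain ⟨i, hi⟩ := (hF x).mp hx
      rw [key i x hi]
      exact ⟨mono 0 i (Fin.zero_le i), mono i (Fin.last d) (Fin.le_last i)⟩
    · have cross : ∀ i j : Fin (d + 1), i < j → ∀ x ∈ Fs i, ∀ y ∈ Fs j,
          wedgeLen σ (σs 0) ≤ wedgeLen x y := by
        intro i j hij x hx y hy
        have hxy : wedgeLen σ x < wedgeLen σ y := by
          rw [key i x hx, key j y hy]; exact hmono i j hij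
        rw [wedgeLen_transfer hxy, key i x hx]
        exact mono 0 i (Fin.zero_le i)
      intro x hx y hy hxy
      obtain ⟨i, hi⟩ := (hF x).mp hx
      obtain ⟨j, hj⟩ := (hF y).mp hy
      rcases lt_trichotomy i j with h | h | h
      · exact cross i j h x hi y hj
      · subst h
        have := (ih i).2.2 x hi y hj hxy
        exact ((mono 0 i (Fin.zero_le i)).trans (hlt i).le).trans this
      · rw [wedgeLen_symm x y]; exact cross j i h y hj x hi
  | attached n d Fs mins maxs σ F hGS hdisj hord hd hF ih =>
    have hle : ∀ i, mins i ≤ maxs i := by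
      intro i
      obtain ⟨τ', hτ', he⟩ := (ih i).1
      have := ((ih i).2.1 τ' hτ').2
      rw [he] at this
      exact this
    have minsmono := chain_mono mins maxs hle hord
    have maxslt : ∀ i j : Fin (d + 1), i < j → maxs i < mins j := by
      intro i j hij
      have hid : i.val < d := lt_of_lt_of_le hij (Nat.lt_succ_iff.mp j.isLt)
      have h2 := hord ⟨i.val, hid⟩
      have e1 : (⟨i.val, hid⟩ : Fin d).castSucc = i := rfl
      have e2 : (⟨i.val, hid⟩ : Fin d).succ = (⟨i.val + 1, Nat.succ_lt_succ hid⟩ : Fin (d + 1)) := rfl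
      rw [e1, e2] at h2
      exact lt_of_lt_of_le h2 (minsmono _ j hij)
    have maxsle : ∀ i : Fin (d + 1), maxs i ≤ maxs (Fin.last d) := by
      intro i
      rcases eq_or_lt_of_le (Fin.le_last i) with h | h
      · rw [h]
      · exact ((maxslt i (Fin.last d) h).trans_le (hle _)).le
    refine ⟨?_, ?_, ?_⟩
    · obtain ⟨τ', hτ', he⟩ := (ih 0).1
      exact ⟨τ', (hF _).mpr ⟨0, hτ'⟩, he⟩
    · intro x hx
      obtain ⟨i, hi⟩ := (hF x).mp hx
      obtain ⟨hlo, hhi⟩ := (ih i).2.1 x hi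
      exact ⟨(minsmono 0 i (Fin.zero_le i)).trans hlo, hhi.trans (maxsle i)⟩
    · have cross : ∀ i j : Fin (d + 1), i < j → ∀ x ∈ Fs i, ∀ y ∈ Fs j,
          mins 0 ≤ wedgeLen x y := by
        intro i j hij x hx y hy
        have hxy : wedgeLen σ x < wedgeLen σ y :=
          lt_of_le_of_lt ((ih i).2.1 x hx).2
            (lt_of_lt_of_le (maxslt i j hij) ((ih j).2.1 y hy).1)
        rw [wedgeLen_transfer hxy]
        exact (minsmono 0 i (Fin.zero_le i)).trans ((ih i).2.1 x hx).1
      intro x hx y hy hxy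
      obtain ⟨i, hi⟩ := (hF x).mp hx
      obtain ⟨j, hj⟩ := (hF y).mp hy
      rcases lt_trichotomy i j with h | h | h
      · exact cross i j h x hi y hj
      · subst h
        exact (minsmono 0 i (Fin.zero_le i)).trans ((ih i).2.2 x hi y hj hxy)
      · rw [wedgeLen_symm x y]; exact cross j i h y hj x hi

theorem GS_exists_min_eq_pair_wedge (n : ℕ) (hn : 1 ≤ n) (F : Finset Cantor)
    (σ : Cantor) (m M : ℕ∞) (h : GS n F σ m M) (hF : 2 ≤ F.card) :
    ∃ σ' : Cantor, ∃ M' : ℕ∞,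
      GS n F σ'
        (sInf {l : ℕ∞ | ∃ τ₁ ∈ F, ∃ τ₂ ∈ F, τ₁ ≠ τ₂ ∧ l = wedgeLen τ₁ τ₂}) M' := by
  clear hn
  revert hF
  induction h with
  | base d τ σ F h1 h2 h3 h4 hFm =>
    intro hcard
    obtain _ | d := d
    · exfalso
      have hone : F.card ≤ 1 := Finset.card_le_one.mpr (by
        intro a ha b hb
        obtain ⟨i, rfl⟩ := (hFm a).mp ha
        obtain ⟨j, rfl⟩ := (hFm b).mp hb
        rw [Subsingleton.elim (α := Fin 1) i j])
      omega
    · have h01 : (0 : Fin (d + 2)) < 1 := by rw [Fin.lt_def]; simp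
      have hlt01 := h3 0 1 h01
      have hne01 : τ 0 ≠ τ 1 := fun he => by
        rw [he] at hlt01; exact lt_irrefl _ hlt01
      have horig : GS 1 F σ (wedgeLen σ (τ 0)) (wedgeLen σ (τ (Fin.last (d + 1)))) :=
        GS.base (d + 1) τ σ F h1 h2 h3 h4 hFm
      have hs : sInf {l : ℕ∞ | ∃ τ₁ ∈ F, ∃ τ₂ ∈ F, τ₁ ≠ τ₂ ∧ l = wedgeLen τ₁ τ₂}
          = wedgeLen σ (τ 0) := by
        apply le_antisymm
        · exact sInf_le ⟨τ 0, (hFm _).mpr ⟨0, rfl⟩, τ 1, (hFm _).mpr ⟨1, rfl⟩, hne01,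
            (wedgeLen_transfer hlt01).symm⟩
        · apply le_sInf
          rintro l ⟨a, ha, b, hb, hab, rfl⟩
          exact (GS_struct horig).2.2 a ha b hb hab
      exact ⟨σ, _, hs ▸ horig⟩
  | up n F σ m M h ih =>
    intro hcard
    obtain ⟨σ', M', h'⟩ := ih hcard
    exact ⟨σ', M', GS.up _ _ _ _ _ h'⟩
  | skipped n d Fs σs mins maxs σ F hGS hdisj hne h0 hmono hlt hd hFm ih =>
    intro hcard
    obtain _ | d := d
    · have hFeq : F = Fs 0 := Finset.ext fun x => by
        rw [hFm x]
        exact ⟨fun ⟨i, hi⟩ => (Subsingleton.elim (α := Fin 1) i 0) ▸ hi, fun h => ⟨0, h⟩⟩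
      subst hFeq
      obtain ⟨σ', M', h'⟩ := ih 0 hcard
      exact ⟨σ', M', GS.up _ _ _ _ _ h'⟩
    · have h01 : (0 : Fin (d + 2)) < 1 := by rw [Fin.lt_def]; simp
      have hm01 := hmono 0 1 h01
      obtain ⟨x, hx, _⟩ := (GS_struct (hGS 0)).1
      obtain ⟨y, hy, _⟩ := (GS_struct (hGS 1)).1
      have hwx : wedgeLen σ x = wedgeLen σ (σs 0) :=
        wedge_of_mem_far σ (σs 0) x (mins 0) (hlt 0) ((GS_struct (hGS 0)).2.1 x hx).1
      have hwy : wedgeLen σ y = wedgeLen σ (σs 1) :=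
        wedge_of_mem_far σ (σs 1) y (mins 1) (hlt 1) ((GS_struct (hGS 1)).2.1 y hy).1
      have hxy : wedgeLen σ x < wedgeLen σ y := by rw [hwx, hwy]; exact hm01
      have hnexy : x ≠ y := fun he => by rw [he] at hxy; exact lt_irrefl _ hxy
      have hw : wedgeLen x y = wedgeLen σ (σs 0) := by
        rw [wedgeLen_transfer hxy, hwx]
      have horig : GS (n + 1) F σ (wedgeLen σ (σs 0)) (wedgeLen σ (σs (Fin.last (d + 1)))) :=
        GS.skipped n (d + 1) Fs σs mins maxs σ F hGS hdisj hne h0 hmono hlt hd hFm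
      have hs : sInf {l : ℕ∞ | ∃ τ₁ ∈ F, ∃ τ₂ ∈ F, τ₁ ≠ τ₂ ∧ l = wedgeLen τ₁ τ₂}
          = wedgeLen σ (σs 0) := by
        apply le_antisymm
        · exact sInf_le ⟨x, (hFm x).mpr ⟨0, hx⟩, y, (hFm y).mpr ⟨1, hy⟩, hnexy, hw.symm⟩
        · apply le_sInf
          rintro l ⟨a, ha, b, hb, hab, rfl⟩
          exact (GS_struct horig).2.2 a ha b hb hab
      exact ⟨σ, _, hs ▸ horig⟩
  | attached n d Fs mins maxs σ F hGS hdisj hord hd hFm ih =>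
    intro hcard
    obtain _ | d := d
    · have hFeq : F = Fs 0 := Finset.ext fun x => by
        rw [hFm x]
        exact ⟨fun ⟨i, hi⟩ => (Subsingleton.elim (α := Fin 1) i 0) ▸ hi, fun h => ⟨0, h⟩⟩
      subst hFeq
      obtain ⟨σ', M', h'⟩ := ih 0 hcard
      exact ⟨σ', M', GS.up _ _ _ _ _ h'⟩
    · obtain ⟨x, hx, hwx⟩ := (GS_struct (hGS 0)).1
      obtain ⟨y, hy, hwy⟩ := (GS_struct (hGS 1)).1
      have h01 := hord 0
      rw [Fin.castSucc_zero, Fin.succ_zero_eq_one] at h01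
      have hmax0 : wedgeLen σ x ≤ maxs 0 := ((GS_struct (hGS 0)).2.1 x hx).2
      have hmin1 : mins 1 ≤ wedgeLen σ y := ((GS_struct (hGS 1)).2.1 y hy).1
      have hxy : wedgeLen σ x < wedgeLen σ y :=
        lt_of_le_of_lt hmax0 (lt_of_lt_of_le h01 hmin1)
      have hnexy : x ≠ y := fun he => by rw [he] at hxy; exact lt_irrefl _ hxy
      have hw : wedgeLen x y = mins 0 := by
        rw [wedgeLen_transfer hxy, hwx]
      have horig : GS (n + 1) F σ (mins 0) (maxs (Fin.last (d + 1))) :=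
        GS.attached n (d + 1) Fs mins maxs σ F hGS hdisj hord hd hFm
      have hs : sInf {l : ℕ∞ | ∃ τ₁ ∈ F, ∃ τ₂ ∈ F, τ₁ ≠ τ₂ ∧ l = wedgeLen τ₁ τ₂}
          = mins 0 := by
        apply le_antisymm
        · exact sInf_le ⟨x, (hFm x).mpr ⟨0, hx⟩, y, (hFm y).mpr ⟨1, hy⟩, hnexy, hw.symm⟩
        · apply le_sInf
          rintro l ⟨a, ha, b, hb, hab, rfl⟩
          exact (GS_struct horig).2.2 a ha b hb hab
      exact ⟨σ, _, hs ▸ horig⟩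
end

section
/- Let (F,σ) ∈ 𝒢ₛ_n for some n ∈ ℕ, and let σ′ ∈ 2^ℕ be such that σ∧τ ⊏ σ′∧τ for all τ ∈ F. Set m = min{k ∈ ℕ : (F,σ) ∈ 𝒢ₛ_k}. Then: (i) if m = 1, then #F = 1; (ii) if m = k + 1 for some k ≥ 1, then there exists σ″ ∈ 2^ℕ with (F,σ″) ∈ 𝒢ₛ_k. -/
lemma le_wedgeLen_iff (σ τ : Cantor) (n : ℕ) :
    (n : ℕ∞) ≤ wedgeLen σ τ ↔ ∀ i < n, σ i = τ i := by
  unfold wedgeLen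
  split
  · next h => subst h; simp
  · next h =>
    rw [Nat.cast_le, Nat.le_find_iff]
    simp

lemma wedgeLen_eq_iff (σ τ : Cantor) (n : ℕ) :
    wedgeLen σ τ = (n : ℕ∞) ↔ (∀ i < n, σ i = τ i) ∧ σ n ≠ τ n := by
  unfold wedgeLen
  split
  · next h => subst h; simp
  · next h =>
    rw [Nat.cast_inj, Nat.find_eq_iff]
    simp [and_comm]

lemma wedge_agree_of_lt {σ τ : Cantor} {n : ℕ} (h : (n : ℕ∞) < wedgeLen σ τ) :
    ∀ i ≤ n, σ i = τ i := by
  intro i hi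
  refine (le_wedgeLen_iff σ τ (n+1)).mp ?_ i (by omega)
  have : (n : ℕ∞) + 1 ≤ wedgeLen σ τ := (ENat.add_one_le_iff (by simp)).mpr h
  exact_mod_cast this

lemma wedge_swap {σ ρ τ : Cantor} (h : wedgeLen σ ρ < wedgeLen ρ τ) :
    wedgeLen σ τ = wedgeLen σ ρ := by
  obtain ⟨n, hn⟩ := WithTop.ne_top_iff_exists.mp (h.trans_le le_top).ne
  have hn' : wedgeLen σ ρ = (n : ℕ∞) := by exact_mod_cast hn.symm
  rw [hn'] at h ⊢
  obtain ⟨h1, h2⟩ := (wedgeLen_eq_iff σ ρ n).mp hn' 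
  have h3 := wedge_agree_of_lt h
  rw [wedgeLen_eq_iff]
  exact ⟨fun i hi => (h1 i hi).trans (h3 i hi.le),
    fun he => h2 (he.trans (h3 n le_rfl).symm)⟩

lemma wedge_contra {σ σ' τ₁ τ₂ : Cantor}
    (h12 : wedgeLen σ τ₁ < wedgeLen σ τ₂)
    (h1 : wedgeLen σ τ₁ < wedgeLen σ' τ₁)
    (h2 : wedgeLen σ τ₂ < wedgeLen σ' τ₂) : False := by
  obtain ⟨n, hn⟩ := WithTop.ne_top_iff_exists.mp (h12.trans_le le_top).ne
  have hn' : wedgeLen σ τ₁ = (n : ℕ∞) := by exact_mod_cast hn.symm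
  rw [hn'] at h12 h1
  obtain ⟨ha, hb⟩ := (wedgeLen_eq_iff σ τ₁ n).mp hn' 
  have hc := wedge_agree_of_lt h12   -- ∀ i ≤ n, σ i = τ₂ i
  have hd := wedge_agree_of_lt h1    -- ∀ i ≤ n, σ' i = τ₁ i
  have he : wedgeLen σ' τ₂ = (n : ℕ∞) := by
    rw [wedgeLen_eq_iff]
    refine ⟨fun i hi => (hd i hi.le).trans ((ha i hi).symm.trans (hc i hi.le)), ?_⟩
    rw [hd n le_rfl, ← hc n le_rfl]
    exact fun hx => hb hx.symm
  rw [he] at h2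
  exact absurd (h12.trans h2) (lt_irrefl _)
lemma chain_aux {d : ℕ} (f g : Fin (d+1) → ℕ∞)
    (hfg : ∀ i, f i ≤ g i)
    (hgf : ∀ i : Fin d, g i.castSucc < f i.succ) :
    ∀ j i : Fin (d+1), i ≤ j → f i ≤ f j ∧ g i ≤ g j := by
  intro j
  induction j using Fin.induction with
  | zero =>
    intro i hi
    rw [Fin.le_zero_iff.mp hi]
    exact ⟨le_rfl, le_rfl⟩
  | succ j ih =>
    intro i hi
    rcases eq_or_lt_of_le hi with rfl | hlt
    · exact ⟨le_rfl, le_rfl⟩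
    · obtain ⟨h3, h4⟩ := ih i (Fin.le_castSucc_iff.mpr hlt)
      exact ⟨h3.trans ((hfg _).trans (hgf j).le),
        h4.trans ((hgf j).le.trans (hfg _))⟩

lemma GS_zero {F : Finset Cantor} {σ : Cantor} {m M : ℕ∞} (h : GS 0 F σ m M) :
    False := by cases h

lemma GS_nonempty {n : ℕ} {F : Finset Cantor} {σ : Cantor} {m M : ℕ∞}
    (h : GS n F σ m M) : F.Nonempty := by
  induction h with
  | base d τ σ F h1 h2 h3 h4 hF => exact ⟨τ 0, (hF _).mpr ⟨0, rfl⟩⟩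
  | up n F σ m M h ih => exact ih
  | skipped n d Fs σs mins maxs σ F hGS hdisj hne h0 hmono hlt hd hF ih =>
    obtain ⟨x, hx⟩ := ih 0
    exact ⟨x, (hF _).mpr ⟨0, hx⟩⟩
  | attached n d Fs mins maxs σ F hGS hdisj hord hd hF ih =>
    obtain ⟨x, hx⟩ := ih 0
    exact ⟨x, (hF _).mpr ⟨0, hx⟩⟩

lemma GS_min_max {n : ℕ} {F : Finset Cantor} {σ : Cantor} {m M : ℕ∞}
    (h : GS n F σ m M) :
    ∀ τ ∈ F, m ≤ wedgeLen σ τ ∧ wedgeLen σ τ ≤ M := by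
  induction h with
  | base d τ σ F h1 h2 h3 h4 hF =>
    intro x hx
    obtain ⟨i, rfl⟩ := (hF _).mp hx
    constructor
    · rcases (Fin.zero_le i).lt_or_eq with hi | hi
      · exact (h3 0 i hi).le
      · rw [← hi]
    · rcases (Fin.le_last i).lt_or_eq with hi | hi
      · exact (h3 i (Fin.last d) hi).le
      · rw [hi]
  | up n F σ m M h ih => exact ih
  | skipped n d Fs σs mins maxs σ F hGS hdisj hne h0 hmono hlt hd hF ih =>
    intro x hx
    obtain ⟨i, hi⟩ := (hF _).mp hx
    have h1 : wedgeLen σ (σs i) < wedgeLen (σs i) x :=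
      (hlt i).trans_le (ih i x hi).1
    have h2 : wedgeLen σ x = wedgeLen σ (σs i) := wedge_swap h1
    rw [h2]
    constructor
    · rcases (Fin.zero_le i).lt_or_eq with hj | hj
      · exact (hmono 0 i hj).le
      · rw [← hj]
    · rcases (Fin.le_last i).lt_or_eq with hj | hj
      · exact (hmono i (Fin.last d) hj).le
      · rw [hj]
  | attached n d Fs mins maxs σ F hGS hdisj hord hd hF ih =>
    intro x hx
    obtain ⟨i, hi⟩ := (hF _).mp hx
    have hfg : ∀ j, mins j ≤ maxs j := by
      intro j
      obtain ⟨y, hy⟩ := GS_nonempty (hGS j)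
      obtain ⟨a, b⟩ := ih j y hy
      exact a.trans b
    obtain ⟨a, b⟩ := ih i x hi
    exact ⟨(chain_aux mins maxs hfg hord i 0 (Fin.zero_le i)).1.trans a,
      b.trans (chain_aux mins maxs hfg hord (Fin.last d) i (Fin.le_last i)).2⟩

theorem GS_of_wedge_lt (n : ℕ) (hn : 1 ≤ n) (F : Finset Cantor) (σ : Cantor)
    (m M : ℕ∞) (h : GS n F σ m M) (σ' : Cantor)
    (h' : ∀ τ ∈ F, wedgeLen σ τ < wedgeLen σ' τ) :
    (sInf {k : ℕ | ∃ m' M', GS k F σ m' M'} = 1 → F.card = 1) ∧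
    (∀ k : ℕ, 1 ≤ k → sInf {k' : ℕ | ∃ m' M', GS k' F σ m' M'} = k + 1 →
      ∃ σ'' : Cantor, ∃ m'' M'' : ℕ∞, GS k F σ'' m'' M'') := by
  have hS : n ∈ {k : ℕ | ∃ m' M', GS k F σ m' M'} := ⟨m, M, h⟩
  constructor
  · intro h1
    have hmem := Nat.sInf_mem (Set.nonempty_of_mem hS)
    rw [h1] at hmem
    obtain ⟨m', M', hg⟩ := hmem
    cases hg with
    | up _ _ _ _ _ hprev => exact absurd hprev GS_zero
    | skipped _ d Fs σs mins maxs _ _ hGS hdisj hne h0 hmono hlt hd hF =>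
      exact absurd (hGS 0) GS_zero
    | attached _ d Fs mins maxs _ _ hGS hdisj hord hd hF =>
      exact absurd (hGS 0) GS_zero
    | base d τ _ _ h1' h2 h3 h4 hF =>
      rcases Nat.eq_zero_or_pos d with rfl | hd0
      · rw [Finset.card_eq_one]
        refine ⟨τ 0, Finset.eq_singleton_iff_unique_mem.mpr ⟨(hF _).mpr ⟨0, rfl⟩, ?_⟩⟩
        intro x hx
        obtain ⟨i, rfl⟩ := (hF _).mp hx
        rw [Fin.fin_one_eq_zero i]
      · exfalso
        have hlast : (0 : Fin (d+1)) < Fin.last d := by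
          rw [Fin.lt_iff_val_lt_val]; simpa using hd0
        exact wedge_contra (h3 0 (Fin.last d) hlast)
          (h' (τ 0) ((hF _).mpr ⟨0, rfl⟩))
          (h' (τ (Fin.last d)) ((hF _).mpr ⟨Fin.last d, rfl⟩))
  · intro k hk heq
    have hmem := Nat.sInf_mem (Set.nonempty_of_mem hS)
    rw [heq] at hmem
    obtain ⟨m', M', hg⟩ := hmem
    cases hg with
    | base d τ _ _ h1' h2 h3 h4 hF => omega
    | up _ _ _ _ _ hprev =>
      have hmem2 : k ∈ {k' : ℕ | ∃ m' M', GS k' F σ m' M'} := ⟨m', M', hprev⟩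
      have := Nat.sInf_le hmem2
      omega
    | skipped _ d Fs σs mins maxs _ _ hGS hdisj hne h0 hmono hlt hd hF =>
      rcases Nat.eq_zero_or_pos d with rfl | hd0
      · have hFeq : F = Fs 0 := by
          ext x
          rw [hF]
          exact ⟨fun ⟨i, hi⟩ => by rwa [Fin.fin_one_eq_zero i] at hi,
            fun hx => ⟨0, hx⟩⟩
        exact ⟨σs 0, mins 0, maxs 0, hFeq ▸ hGS 0⟩
      · exfalso
        have hlast : (0 : Fin (d+1)) < Fin.last d := by
          rw [Fin.lt_iff_val_lt_val]; simpa using hd0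
        obtain ⟨x, hx⟩ := GS_nonempty (hGS 0)
        obtain ⟨y, hy⟩ := GS_nonempty (hGS (Fin.last d))
        have hx' : wedgeLen σ x = wedgeLen σ (σs 0) :=
          wedge_swap ((hlt 0).trans_le (GS_min_max (hGS 0) x hx).1)
        have hy' : wedgeLen σ y = wedgeLen σ (σs (Fin.last d)) :=
          wedge_swap ((hlt _).trans_le (GS_min_max (hGS _) y hy).1)
        refine wedge_contra (σ := σ) (σ' := σ') (τ₁ := x) (τ₂ := y) ?_
          (h' x ((hF _).mpr ⟨0, hx⟩)) (h' y ((hF _).mpr ⟨_, hy⟩))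
        rw [hx', hy']
        exact hmono 0 (Fin.last d) hlast
    | attached _ d Fs mins maxs _ _ hGS hdisj hord hd hF =>
      have hfg : ∀ j, mins j ≤ maxs j := by
        intro j
        obtain ⟨z, hz⟩ := GS_nonempty (hGS j)
        exact (GS_min_max (hGS j) z hz).1.trans (GS_min_max (hGS j) z hz).2
      rcases Nat.eq_zero_or_pos d with rfl | hd0
      · have hFeq : F = Fs 0 := by
          ext x
          rw [hF]
          exact ⟨fun ⟨i, hi⟩ => by rwa [Fin.fin_one_eq_zero i] at hi,
            fun hx => ⟨0, hx⟩⟩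
        have hGSk : GS k F σ (mins 0) (maxs 0) := hFeq ▸ hGS 0
        have hmem2 : k ∈ {k' : ℕ | ∃ m' M', GS k' F σ m' M'} :=
          ⟨mins 0, maxs 0, hGSk⟩
        have := Nat.sInf_le hmem2
        omega
      · exfalso
        obtain ⟨x, hx⟩ := GS_nonempty (hGS 0)
        obtain ⟨y, hy⟩ := GS_nonempty (hGS (Fin.last d))
        have e0 : ((⟨0, hd0⟩ : Fin d).castSucc) = (0 : Fin (d+1)) := by
          ext; simp
        have hchain : maxs 0 < mins (Fin.last d) := by
          have h1 := hord ⟨0, hd0⟩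
          rw [e0] at h1
          exact h1.trans_le
            (chain_aux mins maxs hfg hord (Fin.last d) _ (Fin.le_last _)).1
        refine wedge_contra (σ := σ) (σ' := σ') (τ₁ := x) (τ₂ := y) ?_
          (h' x ((hF _).mpr ⟨0, hx⟩)) (h' y ((hF _).mpr ⟨_, hy⟩))
        exact ((GS_min_max (hGS 0) x hx).2.trans_lt hchain).trans_le
          (GS_min_max (hGS (Fin.last d)) y hy).1
end

section
/- For every n ∈ ℕ, the family 𝒢_n is compact: the set of indicator functions {χ_F : F ∈ 𝒢_n} is a closed (hence compact) subset of the product space {0,1}^{2^ℕ}. Equivalently, every cluster point in {0,1}^{2^ℕ} of a sequence of indicators of members of 𝒢_n is itself the indicator of a member of 𝒢_n; in particular every such cluster point is the indicator of a finite set. -/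
/-- The family `𝒢_n` of finite subsets of the Cantor set. -/
def Gfam (n : ℕ) : Set (Finset Cantor) :=
  {F | F = ∅ ∨ ∃ σ m M, GS n F σ m M}

/-- The indicator function of a set of branches, with values in `Bool`. -/
noncomputable def χS (F : Set Cantor) : Cantor → Bool :=
  fun τ => @ite _ (τ ∈ F) (Classical.propDecidable _) true false

open Filter Topology

theorem natCast_le_wedgeLen_iff {σ τ : Cantor} {k : ℕ} :
    (k : ℕ∞) ≤ wedgeLen σ τ ↔ ∀ j < k, σ j = τ j := by
  classical
  unfold wedgeLen
  split_ifs with h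
  · subst h; simp
  · rw [Nat.cast_le, Nat.le_find_iff]
    simp

theorem min_wedgeLen_le_wedgeLen (σ ρ τ : Cantor) :
    min (wedgeLen σ ρ) (wedgeLen ρ τ) ≤ wedgeLen σ τ :=
  ENat.forall_natCast_le_iff_le.mp fun k hk => by
    rw [le_min_iff, natCast_le_wedgeLen_iff, natCast_le_wedgeLen_iff] at hk
    exact natCast_le_wedgeLen_iff.mpr fun j hj => (hk.1 j hj).trans (hk.2 j hj)

section Chain

variable {α : Type*} [Preorder α] {d : ℕ} {m M : Fin (d + 1) → α}

theorem chain_lt (hmM : ∀ i, m i ≤ M i) (hM : ∀ i : Fin d, M i.castSucc < m i.succ)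
    {a b : Fin (d + 1)} (hab : a < b) : M a < m b := by
  induction b using Fin.induction with
  | zero => exact absurd hab (Fin.not_lt_zero a)
  | succ b ih =>
    rcases (show a ≤ b.castSucc from Fin.le_castSucc_iff.mpr hab).eq_or_lt with rfl | hlt
    · exact hM b
    · exact (ih hlt).trans_le ((hmM _).trans (hM b).le)

theorem chain_monotone_left (hmM : ∀ i, m i ≤ M i) (hM : ∀ i : Fin d, M i.castSucc < m i.succ) :
    Monotone m := fun a b hab => by
  rcases hab.eq_or_lt with rfl | hlt
  · exact le_rfl
  · exact (hmM a).trans (chain_lt hmM hM hlt).le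

theorem chain_monotone_right (hmM : ∀ i, m i ≤ M i) (hM : ∀ i : Fin d, M i.castSucc < m i.succ) :
    Monotone M := fun a b hab => by
  rcases hab.eq_or_lt with rfl | hlt
  · exact le_rfl
  · exact (chain_lt hmM hM hlt).le.trans (hmM b)

end Chain

theorem exists_orderEmbedding_fin_iff {d : ℕ} (p : Fin (d + 1) → Prop) (hp : ∃ i, p i) :
    ∃ (d' : ℕ) (e : Fin (d' + 1) ↪o Fin (d + 1)), d' ≤ d ∧ ∀ i, p i ↔ ∃ j, e j = i := by
  classical
  set s := Finset.univ.filter p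
  obtain ⟨d', hd'⟩ : ∃ d', s.card = d' + 1 := Nat.exists_eq_add_one.mpr <|
    Finset.card_pos.mpr (by simpa [s, Finset.filter_nonempty_iff] using hp)
  let e := s.orderEmbOfFin hd'
  refine ⟨d', e, Nat.succ_le_succ_iff.mp (Fin.le_of_embedding e.toEmbedding), fun i => ?_⟩
  rw [← Set.mem_range, s.range_orderEmbOfFin hd']
  simp [s]

theorem exists_reindex_of_cover {α : Type*} [DecidableEq α] {d : ℕ} {F G : Finset α}
    {Fs : Fin (d + 1) → Finset α} (hF : ∀ x, x ∈ F ↔ ∃ i, x ∈ Fs i)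
    (hdisj : ∀ i j, i ≠ j → ∀ x, x ∈ Fs i → x ∉ Fs j) (hGF : G ⊆ F) (hG : G.Nonempty) :
    ∃ (d' : ℕ) (e : Fin (d' + 1) ↪o Fin (d + 1)), d' ≤ d ∧
      (∀ j, (G ∩ Fs (e j)).Nonempty) ∧
      (∀ i j, i ≠ j → ∀ x, x ∈ G ∩ Fs (e i) → x ∉ G ∩ Fs (e j)) ∧
      ∀ x, x ∈ G ↔ ∃ j, x ∈ G ∩ Fs (e j) := by
  obtain ⟨d', e, hd', he⟩ := exists_orderEmbedding_fin_iff (fun i => (G ∩ Fs i).Nonempty) <| by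
    obtain ⟨x, hx⟩ := hG
    obtain ⟨i, hi⟩ := (hF x).mp (hGF hx)
    exact ⟨i, x, Finset.mem_inter.mpr ⟨hx, hi⟩⟩
  refine ⟨d', e, hd', fun j => (he _).mpr ⟨j, rfl⟩, fun i j hij x hi hj => ?_, fun x => ?_⟩
  · exact hdisj _ _ (e.injective.ne hij) x (Finset.mem_inter.mp hi).2 (Finset.mem_inter.mp hj).2
  · refine ⟨fun hx => ?_, fun ⟨j, hj⟩ => (Finset.mem_inter.mp hj).1⟩
    obtain ⟨i, hi⟩ := (hF x).mp (hGF hx)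
    have hxi : x ∈ G ∩ Fs i := Finset.mem_inter.mpr ⟨hx, hi⟩
    obtain ⟨j, rfl⟩ := (he i).mp ⟨x, hxi⟩
    exact ⟨j, hxi⟩

namespace GS

variable {n : ℕ} {F : Finset Cantor} {σ : Cantor} {m M : ℕ∞}

theorem min_le_max (h : GS n F σ m M) : m ≤ M := by
  induction h with
  | base d τ σ F h1 h2 h3 =>
    exact (show StrictMono fun i => wedgeLen σ (τ i) from h3).monotone (Fin.zero_le _)
  | up _ _ _ _ _ _ ih => exact ih
  | skipped n d Fs σs mins maxs σ F hGS hdisj hne h0 hmono =>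
    exact (show StrictMono fun i => wedgeLen σ (σs i) from hmono).monotone (Fin.zero_le _)
  | attached n d Fs mins maxs σ F hGS hdisj hord hd hF ih =>
    exact (chain_monotone_left ih hord (Fin.zero_le _)).trans (ih _)

theorem one_le_min (h : GS n F σ m M) : 1 ≤ m := by
  induction h with
  | base d τ σ F h1 h2 h3 h4 => exact (Nat.one_le_cast.mpr d.succ_pos).trans h4
  | up _ _ _ _ _ _ ih => exact ih
  | skipped n d Fs σs mins maxs σ F hGS hdisj hne h0 hmono hlt hd =>
    exact (Nat.one_le_cast.mpr d.succ_pos).trans hd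
  | attached n d Fs mins maxs σ F hGS hdisj hord hd =>
    exact (Nat.one_le_cast.mpr d.succ_pos).trans hd

theorem min_le_wedgeLen (h : GS n F σ m M) : ∀ τ ∈ F, m ≤ wedgeLen σ τ := by
  induction h with
  | base d τ σ F h1 h2 h3 h4 hF =>
    intro x hx
    obtain ⟨i, rfl⟩ := (hF x).mp hx
    exact (show StrictMono fun i => wedgeLen σ (τ i) from h3).monotone (Fin.zero_le i)
  | up _ _ _ _ _ _ ih => exact ih
  | skipped n d Fs σs mins maxs σ F hGS hdisj hne h0 hmono hlt hd hF ih =>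
    intro x hx
    obtain ⟨i, hxi⟩ := (hF x).mp hx
    have h0i : wedgeLen σ (σs 0) ≤ wedgeLen σ (σs i) :=
      (show StrictMono fun i => wedgeLen σ (σs i) from hmono).monotone (Fin.zero_le i)
    calc wedgeLen σ (σs 0)
        ≤ min (wedgeLen σ (σs i)) (wedgeLen (σs i) x) :=
          le_min h0i (h0i.trans ((hlt i).le.trans (ih i x hxi)))
      _ ≤ wedgeLen σ x := min_wedgeLen_le_wedgeLen _ _ _
  | attached n d Fs mins maxs σ F hGS hdisj hord hd hF ih =>
    intro x hx
    obtain ⟨i, hxi⟩ := (hF x).mp hx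
    exact (chain_monotone_left (fun i => (hGS i).min_le_max) hord (Fin.zero_le i)).trans
      (ih i x hxi)

theorem exists_of_subset (h : GS n F σ m M) {G : Finset Cantor} (hGF : G ⊆ F)
    (hG : G.Nonempty) : ∃ m' M', GS n G σ m' M' ∧ m ≤ m' ∧ M' ≤ M := by
  classical
  induction h generalizing G with
  | base d τ σ F h1 h2 h3 h4 hF =>
    have hτ : StrictMono fun i => wedgeLen σ (τ i) := h3
    obtain ⟨d', e, hd', he⟩ := exists_orderEmbedding_fin_iff (fun i => τ i ∈ G) <| by
      obtain ⟨x, hx⟩ := hG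
      obtain ⟨i, rfl⟩ := (hF x).mp (hGF hx)
      exact ⟨i, hx⟩
    have h0 : wedgeLen σ (τ 0) ≤ wedgeLen σ (τ (e 0)) := hτ.monotone (Fin.zero_le _)
    refine ⟨_, _, GS.base d' (τ ∘ e) σ G (fun _ => h1 _) (h2.trans_le h0)
      (fun i j hij => hτ (e.strictMono hij))
      ((Nat.cast_le.mpr (Nat.succ_le_succ hd')).trans (h4.trans h0)) fun x => ?_,
      h0, hτ.monotone (Fin.le_last _)⟩
    refine ⟨fun hx => ?_, fun ⟨j, hj⟩ => hj ▸ (he (e j)).mpr ⟨j, rfl⟩⟩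
    obtain ⟨i, rfl⟩ := (hF x).mp (hGF hx)
    obtain ⟨j, rfl⟩ := (he i).mp hx
    exact ⟨j, rfl⟩
  | up n F σ m M h ih =>
    obtain ⟨m', M', h', hm, hM⟩ := ih hGF hG
    exact ⟨m', M', h'.up, hm, hM⟩
  | skipped n d Fs σs mins maxs σ F hGS hdisj hne h0 hmono hlt hd hF ih =>
    obtain ⟨d', e, hd', hne', hdisj', hcover⟩ := exists_reindex_of_cover hF hdisj hGF hG
    choose m' M' hGS' hm' hM' using fun j => ih (e j) Finset.inter_subset_right (hne' j)
    have hσ : StrictMono fun i => wedgeLen σ (σs i) := hmono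
    have h0' : wedgeLen σ (σs 0) ≤ wedgeLen σ (σs (e 0)) := hσ.monotone (Fin.zero_le _)
    exact ⟨_, _, GS.skipped n d' (fun j => G ∩ Fs (e j)) (σs ∘ e) m' M' σ G hGS' hdisj'
      (fun _ => hne _) (h0.trans_le h0') (fun i j hij => hσ (e.strictMono hij))
      (fun j => (hlt _).trans_le (hm' j))
      ((Nat.cast_le.mpr (Nat.succ_le_succ hd')).trans (hd.trans h0')) hcover,
      h0', hσ.monotone (Fin.le_last _)⟩
  | attached n d Fs mins maxs σ F hGS hdisj hord hd hF ih =>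
    obtain ⟨d', e, hd', hne', hdisj', hcover⟩ := exists_reindex_of_cover hF hdisj hGF hG
    choose m' M' hGS' hm' hM' using fun j => ih (e j) Finset.inter_subset_right (hne' j)
    have hmM i := (hGS i).min_le_max
    have h0' : mins 0 ≤ m' 0 := (chain_monotone_left hmM hord (Fin.zero_le (e 0))).trans (hm' 0)
    exact ⟨_, _, GS.attached n d' (fun j => G ∩ Fs (e j)) m' M' σ G hGS' hdisj'
      (fun i => ((hM' _).trans_lt (chain_lt hmM hord (e.strictMono Fin.castSucc_lt_succ))).trans_le
        (hm' _))
      ((Nat.cast_le.mpr (Nat.succ_le_succ hd')).trans (hd.trans h0')) hcover,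
      h0', (hM' _).trans (chain_monotone_right hmM hord (Fin.le_last _))⟩

end GS

theorem mem_Gfam_of_subset {n : ℕ} {F G : Finset Cantor} (hF : F ∈ Gfam n) (hGF : G ⊆ F) :
    G ∈ Gfam n := by
  rcases G.eq_empty_or_nonempty with rfl | hG
  · exact Or.inl rfl
  rcases hF with rfl | ⟨σ, m, M, h⟩
  · exact Or.inl (Finset.subset_empty.mp hGF)
  · obtain ⟨m', M', h', -⟩ := h.exists_of_subset hGF hG
    exact Or.inr ⟨σ, m', M', h'⟩

/-- The shape shared by the three clauses defining `𝒢ₛ_{n+1}`: `d` pieces from `𝓕`, inside the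
cylinder of depth `d` around `σ`. -/
def splittings (𝓕 : Set (Finset Cantor)) : Set (Finset Cantor) :=
  {F | ∃ (d : ℕ) (σ : Cantor) (Fs : Fin d → Finset Cantor),
    (∀ j, Fs j ∈ 𝓕) ∧ (∀ x ∈ F, ∃ j, x ∈ Fs j) ∧ ∀ x ∈ F, (d : ℕ∞) ≤ wedgeLen σ x}

theorem mem_splittings_of_card_le_one {𝓕 : Set (Finset Cantor)} {F : Finset Cantor}
    (hF : F ∈ 𝓕) (hcard : F.card ≤ 1) : F ∈ splittings 𝓕 := by
  obtain ⟨σ, hσ⟩ := Finset.card_le_one_iff_subset_singleton.mp hcard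
  refine ⟨1, σ, fun _ => F, fun _ => hF, fun x hx => ⟨0, hx⟩, fun x hx => ?_⟩
  rw [Finset.mem_singleton.mp (hσ hx)]
  exact natCast_le_wedgeLen_iff.mpr fun _ _ => rfl

/-- Singletons are added so that the induction starts at `n = 0` and covers the base clause. -/
def gsOrSubsingleton (n : ℕ) : Set (Finset Cantor) :=
  {F | F.card ≤ 1 ∨ ∃ σ m M, GS n F σ m M}

theorem GS.mem_splittings {n : ℕ} {F : Finset Cantor} {σ : Cantor} {m M : ℕ∞}
    (h : GS (n + 1) F σ m M) : F ∈ splittings (gsOrSubsingleton n) := by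
  have hw := h.min_le_wedgeLen
  cases h with
  | base d τ σ F h1 h2 h3 h4 hF =>
    refine ⟨d + 1, σ, fun i => {τ i}, fun i => Or.inl (Finset.card_singleton _).le,
      fun x hx => ?_, fun x hx => h4.trans (hw x hx)⟩
    obtain ⟨i, rfl⟩ := (hF x).mp hx
    exact ⟨i, Finset.mem_singleton_self _⟩
  | up n F σ m M h =>
    exact ⟨1, σ, fun _ => F, fun _ => Or.inr ⟨σ, m, M, h⟩, fun x hx => ⟨0, hx⟩,
      fun x hx => mod_cast h.one_le_min.trans (hw x hx)⟩
  | skipped n d Fs σs mins maxs σ F hGS hdisj hne h0 hmono hlt hd hF =>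
    exact ⟨d + 1, σ, Fs, fun i => Or.inr ⟨_, _, _, hGS i⟩, fun x hx => (hF x).mp hx,
      fun x hx => hd.trans (hw x hx)⟩
  | attached n d Fs mins maxs σ F hGS hdisj hord hd hF =>
    exact ⟨d + 1, σ, Fs, fun i => Or.inr ⟨_, _, _, hGS i⟩, fun x hx => (hF x).mp hx,
      fun x hx => hd.trans (hw x hx)⟩

theorem gsOrSubsingleton_succ_subset (n : ℕ) :
    gsOrSubsingleton (n + 1) ⊆ splittings (gsOrSubsingleton n) := by
  rintro F (hF | ⟨σ, m, M, h⟩)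
  · exact mem_splittings_of_card_le_one (Or.inl hF) hF
  · exact h.mem_splittings

def limSet {α : Type*} (u : Ultrafilter (Finset α)) : Set α :=
  {a | ∀ᶠ F in (u : Filter (Finset α)), a ∈ F}

def HasFiniteLimSets {α : Type*} (𝓕 : Set (Finset α)) : Prop :=
  ∀ u : Ultrafilter (Finset α), 𝓕 ∈ u → (limSet u).Finite

theorem HasFiniteLimSets.mono {α : Type*} {𝓕 𝓖 : Set (Finset α)} (h : 𝓕 ⊆ 𝓖)
    (h𝓖 : HasFiniteLimSets 𝓖) : HasFiniteLimSets 𝓕 :=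
  fun u hu => h𝓖 u (Filter.mem_of_superset hu h)

theorem hasFiniteLimSets_card_le_one {α : Type*} :
    HasFiniteLimSets {F : Finset α | F.card ≤ 1} := by
  intro u hu
  refine Set.Subsingleton.finite fun a ha b hb => ?_
  obtain ⟨F, haF, hbF, hF⟩ := (ha.and (hb.and hu)).exists
  exact Finset.card_le_one.mp hF a haF b hbF

theorem HasFiniteLimSets.splittings {𝓕 : Set (Finset Cantor)} (h : HasFiniteLimSets 𝓕) :
    HasFiniteLimSets (splittings 𝓕) := by
  intro u (hu : ∀ᶠ F in (u : Filter (Finset Cantor)), F ∈ _root_.splittings 𝓕)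
  choose! d σ Fs hFs hcover hcyl using fun F (hF : F ∈ _root_.splittings 𝓕) => hF
  rcases (u.map d).le_cofinite_or_eq_pure with hd | ⟨k, hk⟩
  · refine Set.Subsingleton.finite fun a ha b hb => funext fun j => ?_
    have hj : ∀ᶠ F in (u : Filter (Finset Cantor)), j < d F :=
      hd (Nat.cofinite_eq_atTop ▸ eventually_gt_atTop j)
    obtain ⟨F, haF, hbF, hF, hjF⟩ := (ha.and (hb.and (hu.and hj))).exists
    have hσ : ∀ x ∈ F, σ F j = x j := fun x hx =>
      natCast_le_wedgeLen_iff.mp (hcyl F hF x hx) j hjF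
    exact (hσ a haF).symm.trans (hσ b hbF)
  · have hdk : ∀ᶠ F in (u : Filter (Finset Cantor)), d F = k :=
      show ∀ᶠ x in ((u.map d : Ultrafilter ℕ) : Filter ℕ), x = k by rw [hk]; simp
    let piece (j : Fin k) (F : Finset Cantor) : Finset Cantor :=
      if hj : (j : ℕ) < d F then Fs F ⟨j, hj⟩ else ∅
    refine (Set.finite_iUnion fun j => h (u.map (piece j)) ?_).subset fun a ha => ?_
    · show ∀ᶠ F in (u : Filter (Finset Cantor)), piece j F ∈ 𝓕
      filter_upwards [hu, hdk] with F hF hdF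
      simp only [piece, dif_pos (hdF ▸ j.isLt : (j : ℕ) < d F)]
      exact hFs F hF _
    · have : ∀ᶠ F in (u : Filter (Finset Cantor)), ∃ j, a ∈ piece j F := by
        filter_upwards [ha, hu, hdk] with F haF hF hdF
        obtain ⟨i, hi⟩ := hcover F hF a haF
        exact ⟨⟨i, hdF ▸ i.isLt⟩, by simpa [piece, i.isLt] using hi⟩
      exact Set.mem_iUnion.mpr (Ultrafilter.eventually_exists_iff.mp this)

theorem hasFiniteLimSets_gsOrSubsingleton (n : ℕ) : HasFiniteLimSets (gsOrSubsingleton n) := by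
  induction n with
  | zero =>
    refine hasFiniteLimSets_card_le_one.mono ?_
    rintro F (hF | ⟨σ, m, M, h⟩)
    · exact hF
    · cases h
  | succ n ih => exact ih.splittings.mono (gsOrSubsingleton_succ_subset n)

theorem χS_coe_eq_true_iff (F : Finset Cantor) (τ : Cantor) : χS ↑F τ = true ↔ τ ∈ F := by
  unfold χS
  split_ifs with h <;> simpa using h

theorem limSet_eq_of_tendsto {u : Ultrafilter (Finset Cantor)} {f : Cantor → Bool}
    (hf : Tendsto (fun F : Finset Cantor => χS ↑F) u (𝓝 f)) : limSet u = {τ | f τ = true} := by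
  ext τ
  have hτ : ∀ᶠ F : Finset Cantor in (u : Filter (Finset Cantor)), χS ↑F τ = f τ := by
    simpa [nhds_discrete] using tendsto_pi_nhds.mp hf τ
  change (∀ᶠ F in (u : Filter (Finset Cantor)), τ ∈ F) ↔ f τ = true
  exact (Filter.eventually_congr (hτ.mono fun F hF => by rw [← χS_coe_eq_true_iff, hF])).trans
    Filter.eventually_const

theorem isClosed_setOf_eq_χS {𝓕 : Set (Finset Cantor)} (hsub : ∀ F ∈ 𝓕, ∀ G ⊆ F, G ∈ 𝓕)
    (hfin : HasFiniteLimSets 𝓕) :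
    IsClosed {f : Cantor → Bool | ∃ F ∈ 𝓕, f = χS (↑F : Set Cantor)} := by
  have himage : {f : Cantor → Bool | ∃ F ∈ 𝓕, f = χS (↑F : Set Cantor)} =
      (fun F : Finset Cantor => χS ↑F) '' 𝓕 := by
    ext; simp [eq_comm]
  rw [himage, isClosed_iff_ultrafilter]
  intro f u hu hS
  set v := Ultrafilter.ofComapInfPrincipal hS
  have hv𝓕 : ∀ᶠ F in (v : Filter (Finset Cantor)), F ∈ 𝓕 :=
    Ultrafilter.ofComapInfPrincipal_mem hS
  have hv : Tendsto (fun F : Finset Cantor => χS ↑F) v (𝓝 f) := by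
    rw [Tendsto, ← Ultrafilter.coe_map, Ultrafilter.ofComapInfPrincipal_eq_of_map]
    exact hu
  have hA := hfin v hv𝓕
  have hAF : ∀ᶠ F in (v : Filter (Finset Cantor)), hA.toFinset ⊆ F :=
    (Filter.eventually_all_finset hA.toFinset).mpr fun τ hτ => hA.mem_toFinset.mp hτ
  obtain ⟨F, hF, hAF⟩ := (hv𝓕.and hAF).exists
  refine ⟨hA.toFinset, hsub F hF _ hAF, funext fun τ => ?_⟩
  rw [Bool.eq_iff_iff, χS_coe_eq_true_iff, Set.Finite.mem_toFinset, limSet_eq_of_tendsto hv]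
  rfl

theorem Gfam_subset_gsOrSubsingleton (n : ℕ) : Gfam n ⊆ gsOrSubsingleton n := by
  rintro F (rfl | h)
  · exact Or.inl (by simp)
  · exact Or.inr h

theorem Gfam_compact_general (n : ℕ) :
    IsClosed {f : Cantor → Bool | ∃ F ∈ Gfam n, f = χS (↑F : Set Cantor)} ∧
    IsCompact {f : Cantor → Bool | ∃ F ∈ Gfam n, f = χS (↑F : Set Cantor)} := by
  have hclosed := isClosed_setOf_eq_χS (fun _ hF _ hGF => mem_Gfam_of_subset hF hGF)
    ((hasFiniteLimSets_gsOrSubsingleton n).mono (Gfam_subset_gsOrSubsingleton n))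
  exact ⟨hclosed, hclosed.isCompact⟩

theorem Gfam_compact (n : ℕ) (hn : 1 ≤ n) :
    IsClosed {f : Cantor → Bool | ∃ F ∈ Gfam n, f = χS (↑F : Set Cantor)} ∧
    IsCompact {f : Cantor → Bool | ∃ F ∈ Gfam n, f = χS (↑F : Set Cantor)} :=
  Gfam_compact_general n
end
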